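/- Let k, l, m be positive integers, let f assign a real number f(i,j) to each pair 1 ≤ i < j ≤ m, and suppose f is (k+2, l+2)-free. Then for every pair 1 ≤ i < j ≤ m there exist x' ∈ {1,…,k} and y' ∈ {1,…,l} such that: (1) whenever an (x'+1)-cup with respect to f starts with the pair (j, a) and a (y'+1)-cap starts with the pair (j, b), one has f(j,a) < f(j,b) (this holds vacuously if either does not exist); and (2) there exist an (x'+1)-cup starting with a pair (i, a) and a (y'+1)-cap starting with a pair (i, b) such that f(i,a) ≥ f(i,b). (Consequently the words R_i and R_j of the paper are distinct for i ≠ j.) -/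

import Mathlib

/-- A `t`-cup with respect to `f` on indices `{1, …, m}`: a strictly increasing
sequence `q 0 < q 1 < ⋯ < q (t-1)` of indices, with non-decreasing values of `f`
on consecutive pairs. -/
def IsCup (m : ℕ) (f : ℕ → ℕ → ℝ) (t : ℕ) (q : ℕ → ℕ) : Prop :=
  (∀ i, i < t → 1 ≤ q i ∧ q i ≤ m) ∧
  (∀ i, i + 1 < t → q i < q (i + 1)) ∧
  (∀ i, i + 2 < t → f (q i) (q (i + 1)) ≤ f (q (i + 1)) (q (i + 2)))

/-- A `t`-cap with respect to `f` on indices `{1, …, m}`: a strictly increasing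
sequence of indices with non-increasing values of `f` on consecutive pairs. -/
def IsCap (m : ℕ) (f : ℕ → ℕ → ℝ) (t : ℕ) (q : ℕ → ℕ) : Prop :=
  (∀ i, i < t → 1 ≤ q i ∧ q i ≤ m) ∧
  (∀ i, i + 1 < t → q i < q (i + 1)) ∧
  (∀ i, i + 2 < t → f (q (i + 1)) (q (i + 2)) ≤ f (q i) (q (i + 1)))

/-- `f` is `(k, l)`-free: there is no `k`-cup and no `l`-cap with respect to `f`. -/
def IsFree (m : ℕ) (f : ℕ → ℕ → ℝ) (k l : ℕ) : Prop :=
  (¬ ∃ q, IsCup m f k q) ∧ (¬ ∃ q, IsCap m f l q)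

/-!
Fix `i < j`. Let `x' + 1` be the length of a longest cup beginning with the pair `(i, j)` and
`y' + 1` that of a longest cap beginning with `(i, j)`; freeness gives `x' ≤ k`, `y' ≤ l`.
These cup and cap witness (2), both with second vertex `j`. For (1), if an `(x'+1)`-cup `(j, a, …)`
and a `(y'+1)`-cap `(j, b, …)` had `f(j,a) ≥ f(j,b)`, then either `f(i,j) ≤ f(j,a)` and `i`
extends the cup, or `f(i,j) > f(j,a) ≥ f(j,b)` and `i` extends the cap: both contradict maximality.
-/

theorem Nat.exists_le_and_not_succ_of_bddAbove {P : ℕ → Prop} {a N : ℕ} (ha : P a)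
    (hN : ∀ t, P t → t ≤ N) : ∃ t, a ≤ t ∧ t ≤ N ∧ P t ∧ ¬ P (t + 1) := by
  classical
  exact ⟨Nat.findGreatest P N, Nat.le_findGreatest (hN a ha) ha, Nat.findGreatest_le N,
    Nat.findGreatest_spec (hN a ha) ha,
    fun h => Nat.findGreatest_is_greatest (Nat.lt_succ_self _) (hN _ h) h⟩

section CupsAndCaps

variable {m : ℕ} {f : ℕ → ℕ → ℝ} {t s : ℕ} {q : ℕ → ℕ}

theorem IsCup.mono (h : IsCup m f t q) (hs : s ≤ t) : IsCup m f s q :=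
  ⟨fun n hn => h.1 n (by omega), fun n hn => h.2.1 n (by omega), fun n hn => h.2.2 n (by omega)⟩

theorem IsCap.mono (h : IsCap m f t q) (hs : s ≤ t) : IsCap m f s q :=
  ⟨fun n hn => h.1 n (by omega), fun n hn => h.2.1 n (by omega), fun n hn => h.2.2 n (by omega)⟩

theorem IsFree.cup_length_lt {k l : ℕ} (hf : IsFree m f k l) (h : IsCup m f t q) : t < k := by
  by_contra! hkt
  exact hf.1 ⟨q, h.mono hkt⟩

theorem IsFree.cap_length_lt {k l : ℕ} (hf : IsFree m f k l) (h : IsCap m f t q) : t < l := by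
  by_contra! hlt
  exact hf.2 ⟨q, h.mono hlt⟩

theorem isCup_two (h0 : 1 ≤ q 0) (h01 : q 0 < q 1) (h1 : q 1 ≤ m) : IsCup m f 2 q := by
  refine ⟨fun n hn => ?_, fun n hn => ?_, fun n hn => absurd hn (by omega)⟩
  · interval_cases n <;> omega
  · obtain rfl : n = 0 := by omega
    exact h01

theorem isCap_two (h0 : 1 ≤ q 0) (h01 : q 0 < q 1) (h1 : q 1 ≤ m) : IsCap m f 2 q := by
  refine ⟨fun n hn => ?_, fun n hn => ?_, fun n hn => absurd hn (by omega)⟩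
  · interval_cases n <;> omega
  · obtain rfl : n = 0 := by omega
    exact h01

def HasCupFrom (m : ℕ) (f : ℕ → ℕ → ℝ) (t i j : ℕ) : Prop :=
  ∃ q, IsCup m f t q ∧ q 0 = i ∧ q 1 = j

def HasCapFrom (m : ℕ) (f : ℕ → ℕ → ℝ) (t i j : ℕ) : Prop :=
  ∃ q, IsCap m f t q ∧ q 0 = i ∧ q 1 = j

theorem hasCupFrom_two {i j : ℕ} (hi : 1 ≤ i) (hij : i < j) (hj : j ≤ m) :
    HasCupFrom m f 2 i j :=
  ⟨Stream'.cons i (Stream'.const j), isCup_two hi hij hj, rfl, rfl⟩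

theorem hasCapFrom_two {i j : ℕ} (hi : 1 ≤ i) (hij : i < j) (hj : j ≤ m) :
    HasCapFrom m f 2 i j :=
  ⟨Stream'.cons i (Stream'.const j), isCap_two hi hij hj, rfl, rfl⟩

theorem IsCup.cons {a : ℕ} (h : IsCup m f t q) (ht : 0 < t) (ha : 1 ≤ a) (haq : a < q 0)
    (hval : f a (q 0) ≤ f (q 0) (q 1)) : IsCup m f (t + 1) (Stream'.cons a q) := by
  refine ⟨fun n hn => ?_, fun n hn => ?_, fun n hn => ?_⟩ <;> cases n
  · exact ⟨ha, haq.le.trans (h.1 0 ht).2⟩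
  · exact h.1 _ (by omega)
  · exact haq
  · exact h.2.1 _ (by omega)
  · exact hval
  · exact h.2.2 _ (by omega)

theorem IsCap.cons {a : ℕ} (h : IsCap m f t q) (ht : 0 < t) (ha : 1 ≤ a) (haq : a < q 0)
    (hval : f (q 0) (q 1) ≤ f a (q 0)) : IsCap m f (t + 1) (Stream'.cons a q) := by
  refine ⟨fun n hn => ?_, fun n hn => ?_, fun n hn => ?_⟩ <;> cases n
  · exact ⟨ha, haq.le.trans (h.1 0 ht).2⟩
  · exact h.1 _ (by omega)
  · exact haq
  · exact h.2.1 _ (by omega)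
  · exact hval
  · exact h.2.2 _ (by omega)

theorem cup_lt_cap_of_maximal {i j x y : ℕ} {qc qd : ℕ → ℕ} (hi : 1 ≤ i) (hij : i < j)
    (hcup : ¬ HasCupFrom m f (x + 2) i j) (hcap : ¬ HasCapFrom m f (y + 2) i j)
    (hqc : IsCup m f (x + 1) qc) (hqc0 : qc 0 = j) (hqd : IsCap m f (y + 1) qd) (hqd0 : qd 0 = j) :
    f j (qc 1) < f j (qd 1) := by
  by_contra! hdc
  rcases le_or_gt (f i j) (f j (qc 1)) with hle | hlt
  · exact hcup ⟨_, hqc.cons x.succ_pos hi (hqc0 ▸ hij) (by rwa [hqc0]), rfl, hqc0⟩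
  · exact hcap ⟨_, hqd.cons y.succ_pos hi (hqd0 ▸ hij) (by rw [hqd0]; linarith), rfl, hqd0⟩

end CupsAndCaps

theorem R_words_distinct_general (k l m : ℕ) (f : ℕ → ℕ → ℝ) (hf : IsFree m f (k + 2) (l + 2)) :
    ∀ i j : ℕ, 1 ≤ i → i < j → j ≤ m →
      ∃ x' ∈ Finset.Icc 1 k, ∃ y' ∈ Finset.Icc 1 l,
        -- (1) every (x'+1)-cup starting at j is below every (y'+1)-cap starting at j
        (∀ qc qd, IsCup m f (x' + 1) qc → qc 0 = j →
          IsCap m f (y' + 1) qd → qd 0 = j →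
          f j (qc 1) < f j (qd 1)) ∧
        -- (2) some (x'+1)-cup and some (y'+1)-cap starting at i with f(i,a) ≥ f(i,b)
        (∃ qc qd, IsCup m f (x' + 1) qc ∧ qc 0 = i ∧
          IsCap m f (y' + 1) qd ∧ qd 0 = i ∧
          f i (qd 1) ≤ f i (qc 1)) := by
  intro i j hi hij hj
  obtain ⟨x, hx, hxk, ⟨qc, hqc, hqc0, hqc1⟩, hcup⟩ :=
    Nat.exists_le_and_not_succ_of_bddAbove (P := fun x => HasCupFrom m f (x + 1) i j) (N := k)
      (hasCupFrom_two hi hij hj) fun _ ⟨_, hq, _⟩ => by have := hf.cup_length_lt hq; omega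
  obtain ⟨y, hy, hyl, ⟨qd, hqd, hqd0, hqd1⟩, hcap⟩ :=
    Nat.exists_le_and_not_succ_of_bddAbove (P := fun y => HasCapFrom m f (y + 1) i j) (N := l)
      (hasCapFrom_two hi hij hj) fun _ ⟨_, hq, _⟩ => by have := hf.cap_length_lt hq; omega
  refine ⟨x, Finset.mem_Icc.2 ⟨hx, hxk⟩, y, Finset.mem_Icc.2 ⟨hy, hyl⟩,
    fun _ _ => cup_lt_cap_of_maximal hi hij hcup hcap, qc, qd, hqc, hqc0, hqd, hqd0, ?_⟩
  rw [hqc1, hqd1]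

/-- Symmetric version: for a `(k+2, l+2)`-free `f` and `i < j`, there exist
`x' ∈ [k]`, `y' ∈ [l]` such that every `(x'+1)`-cup starting at `j` has a
strictly smaller first value than every `(y'+1)`-cap starting at `j`, while some
`(x'+1)`-cup and `(y'+1)`-cap starting at `i` compare the other way. (Hence the
words `R_i` are pairwise distinct.) -/
theorem R_words_distinct (k l m : ℕ) (hk : 1 ≤ k) (hl : 1 ≤ l) (hm : 1 ≤ m)
    (f : ℕ → ℕ → ℝ) (hf : IsFree m f (k + 2) (l + 2)) :
    ∀ i j : ℕ, 1 ≤ i → i < j → j ≤ m →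
      ∃ x' ∈ Finset.Icc 1 k, ∃ y' ∈ Finset.Icc 1 l,
        -- (1) every (x'+1)-cup starting at j is below every (y'+1)-cap starting at j
        (∀ qc qd, IsCup m f (x' + 1) qc → qc 0 = j →
          IsCap m f (y' + 1) qd → qd 0 = j →
          f j (qc 1) < f j (qd 1)) ∧
        -- (2) some (x'+1)-cup and some (y'+1)-cap starting at i with f(i,a) ≥ f(i,b)
        (∃ qc qd, IsCup m f (x' + 1) qc ∧ qc 0 = i ∧
          IsCap m f (y' + 1) qd ∧ qd 0 = i ∧
          f i (qd 1) ≤ f i (qc 1)) :=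
  R_words_distinct_general k l m f hf
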